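/- (Generalization of the saddle-point solution) Let (Q̂, λ̂) be a ν-approximate saddle point of L(Q,λ) = err̂(Q) + λᵀ(γ̂(Q) − ĉ) over Δ × {λ ∈ ℝ_+^K : ‖λ‖₁ ≤ B}, with ĉ_k = c_k + ε_k. Assume (i) |err̂(Q) − err(Q)| ≤ ε₀ for all Q ∈ Δ, (ii) |γ̂_k(Q) − γ_k(Q)| ≤ ε_k for all k and all Q ∈ Δ, (iii) err̂ takes values in [0,1], and (iv) Q* ∈ Δ satisfies γ(Q*) ≤ c. Then err(Q̂) ≤ err(Q*) + 2ν + 2ε₀, and γ_k(Q̂) ≤ c_k + (1+2ν)/B + 2ε_k for all k. -/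

import Mathlib

/-!
Plugging a feasible `Q*` into the first saddle-point inequality bounds `L(Q̂, λ̂)` above by
`err̂(Q*) + ν`, since its penalty term is nonpositive. The second inequality, tested at `λ = 0`
and at `λ = B e_k`, bounds `L(Q̂, λ̂)` below by `err̂(Q̂) - ν` and by
`err̂(Q̂) + B (γ̂_k(Q̂) - ĉ_k) - ν`. Comparing gives the empirical bounds
`err̂(Q̂) ≤ err̂(Q*) + 2ν` and `γ̂_k(Q̂) ≤ ĉ_k + (1 + 2ν)/B` (using `err̂ ∈ [0, 1]`);
the uniform deviation bounds transfer them to `err` and `γ`, and make `Q*` empirically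
feasible for `ĉ = c + ε`.
-/

open Finset

def nonnegL1Ball (K : Type*) [Fintype K] (B : ℝ) : Set (K → ℝ) :=
  {lam | (∀ k, 0 ≤ lam k) ∧ ∑ k, |lam k| ≤ B}

variable {α K : Type*} [Fintype K]

def lagrangian (errhat : α → ℝ) (gamhat : α → K → ℝ) (chat : K → ℝ) (Q : α) (lam : K → ℝ) :
    ℝ :=
  errhat Q + ∑ k, lam k * (gamhat Q k - chat k)

structure IsApproxSaddlePoint {β : Type*} (L : α → β → ℝ) (Δ : Set α) (Λ : Set β) (ν : ℝ)
    (Q : α) (lam : β) : Prop where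
  mem_left : Q ∈ Δ
  mem_right : lam ∈ Λ
  le_left : ∀ Q' ∈ Δ, L Q lam ≤ L Q' lam + ν
  le_right : ∀ lam' ∈ Λ, L Q lam' - ν ≤ L Q lam

section Lagrangian

variable (errhat : α → ℝ) (gamhat : α → K → ℝ) (chat : K → ℝ)

theorem lagrangian_le_of_feasible {Q : α} {lam : K → ℝ} (hlam : ∀ k, 0 ≤ lam k)
    (hQ : ∀ k, gamhat Q k ≤ chat k) : lagrangian errhat gamhat chat Q lam ≤ errhat Q := by
  have hpenalty : ∑ k, lam k * (gamhat Q k - chat k) ≤ 0 :=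
    sum_nonpos fun k _ => mul_nonpos_of_nonneg_of_nonpos (hlam k) (sub_nonpos.2 (hQ k))
  unfold lagrangian
  linarith

@[simp]
theorem lagrangian_zero (Q : α) : lagrangian errhat gamhat chat Q 0 = errhat Q := by
  simp [lagrangian]

theorem lagrangian_single [DecidableEq K] (Q : α) (k : K) (b : ℝ) :
    lagrangian errhat gamhat chat Q (Pi.single k b) = errhat Q + b * (gamhat Q k - chat k) := by
  simp [lagrangian, Pi.single_apply]

end Lagrangian

section NonnegL1Ball

variable {B : ℝ}

theorem zero_mem_nonnegL1Ball (hB : 0 ≤ B) : (0 : K → ℝ) ∈ nonnegL1Ball K B :=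
  ⟨fun _ => le_rfl, by simpa using hB⟩

theorem single_mem_nonnegL1Ball [DecidableEq K] (hB : 0 ≤ B) (k : K) :
    Pi.single k B ∈ nonnegL1Ball K B := by
  refine ⟨fun j => ?_, ?_⟩
  · rcases eq_or_ne j k with rfl | hjk
    · simpa using hB
    · simp [hjk]
  · simp [Pi.single_apply, apply_ite abs, abs_of_nonneg hB]

end NonnegL1Ball

namespace IsApproxSaddlePoint

variable {errhat : α → ℝ} {gamhat : α → K → ℝ} {chat : K → ℝ} {Δ : Set α} {B ν : ℝ}
  {Qh : α} {lamh : K → ℝ}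
  (hsaddle : IsApproxSaddlePoint (lagrangian errhat gamhat chat) Δ (nonnegL1Ball K B) ν Qh lamh)
include hsaddle

theorem lagrangian_le_add_of_feasible {Q : α} (hQ : Q ∈ Δ) (hfeas : ∀ k, gamhat Q k ≤ chat k) :
    lagrangian errhat gamhat chat Qh lamh ≤ errhat Q + ν := by
  have := lagrangian_le_of_feasible errhat gamhat chat hsaddle.mem_right.1 hfeas
  linarith [hsaddle.le_left Q hQ]

theorem empirical_error_le (hB : 0 ≤ B) {Q : α} (hQ : Q ∈ Δ)
    (hfeas : ∀ k, gamhat Q k ≤ chat k) : errhat Qh ≤ errhat Q + 2 * ν := by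
  have hlower := hsaddle.le_right 0 (zero_mem_nonnegL1Ball hB)
  rw [lagrangian_zero] at hlower
  linarith [hsaddle.lagrangian_le_add_of_feasible hQ hfeas]

theorem empirical_violation_le (hB : 0 < B) (hQh : 0 ≤ errhat Qh) {Q : α} (hQ : Q ∈ Δ)
    (hfeas : ∀ k, gamhat Q k ≤ chat k) (hQ1 : errhat Q ≤ 1) (k : K) :
    gamhat Qh k ≤ chat k + (1 + 2 * ν) / B := by
  classical
  have hlower := hsaddle.le_right _ (single_mem_nonnegL1Ball hB.le k)
  rw [lagrangian_single] at hlower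
  have hscaled : B * (gamhat Qh k - chat k) ≤ 1 + 2 * ν := by
    linarith [hsaddle.lagrangian_le_add_of_feasible hQ hfeas]
  have := (le_div_iff₀' hB).2 hscaled
  linarith

end IsApproxSaddlePoint

theorem generalization_of_saddle_point_general
    (H K : Type) [Fintype K]
    (errhat err : (H → ℝ) → ℝ)
    (gamhat gam : (H → ℝ) → K → ℝ)
    (c : K → ℝ) (ε0 : ℝ) (ε : K → ℝ) (chat : K → ℝ)
    (hchat : ∀ k, chat k = c k + ε k)
    (B ν : ℝ) (hB : 0 < B)
    (L : (H → ℝ) → (K → ℝ) → ℝ)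
    (hL : ∀ Q lam, L Q lam = errhat Q + ∑ k, lam k * (gamhat Q k - chat k))
    (Δ : Set (H → ℝ))
    (Λ : Set (K → ℝ)) (hΛ : Λ = {lam | (∀ k, 0 ≤ lam k) ∧ ∑ k, |lam k| ≤ B})
    (herrdev : ∀ Q ∈ Δ, |errhat Q - err Q| ≤ ε0)
    (hgamdev : ∀ Q ∈ Δ, ∀ k, |gamhat Q k - gam Q k| ≤ ε k)
    (herr01 : ∀ Q ∈ Δ, errhat Q ∈ Set.Icc (0 : ℝ) 1)
    (Qstar : H → ℝ) (hQstar : Qstar ∈ Δ) (hfeas : ∀ k, gam Qstar k ≤ c k)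
    (Qh : H → ℝ) (lamh : K → ℝ) (hQh : Qh ∈ Δ) (hlamh : lamh ∈ Λ)
    (hsaddle1 : ∀ Q ∈ Δ, L Qh lamh ≤ L Q lamh + ν)
    (hsaddle2 : ∀ lam ∈ Λ, L Qh lam - ν ≤ L Qh lamh) :
    err Qh ≤ err Qstar + 2 * ν + 2 * ε0 ∧
      ∀ k, gam Qh k ≤ c k + (1 + 2 * ν) / B + 2 * ε k := by
  obtain rfl : L = lagrangian errhat gamhat chat := funext₂ hL
  subst hΛ
  have hsaddle : IsApproxSaddlePoint (lagrangian errhat gamhat chat) Δ (nonnegL1Ball K B) ν Qh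
      lamh := ⟨hQh, hlamh, hsaddle1, hsaddle2⟩
  have hfeas_emp : ∀ k, gamhat Qstar k ≤ chat k := fun k => by
    linarith [hchat k, hfeas k, (abs_le.1 (hgamdev Qstar hQstar k)).2]
  refine ⟨?_, fun k => ?_⟩
  · linarith [hsaddle.empirical_error_le hB.le hQstar hfeas_emp,
      (abs_le.1 (herrdev Qh hQh)).1, (abs_le.1 (herrdev Qstar hQstar)).2]
  · linarith [hsaddle.empirical_violation_le hB (herr01 Qh hQh).1 hQstar hfeas_emp
      (herr01 Qstar hQstar).2 k, hchat k, (abs_le.1 (hgamdev Qh hQh k)).1]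

/-- generalization of the saddle-point solution: under uniform
deviation bounds for the error and the constraints, a ν-approximate saddle
point `(Q̂, λ̂)` of the empirical Lagrangian with `ĉ = c + ε` satisfies
`err(Q̂) ≤ err(Q*) + 2ν + 2ε₀` and `γ_k(Q̂) ≤ c_k + (1+2ν)/B + 2ε_k` for all `k`,
for any `Q*` that is feasible for the true constraints. -/
theorem generalization_of_saddle_point
    (H K : Type) [Fintype H] [Fintype K]
    (errhat err : (H → ℝ) → ℝ)
    (gamhat gam : (H → ℝ) → K → ℝ)
    (c : K → ℝ) (ε0 : ℝ) (ε : K → ℝ) (chat : K → ℝ)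
    (hchat : ∀ k, chat k = c k + ε k)
    (hε0 : 0 ≤ ε0) (hε : ∀ k, 0 ≤ ε k)
    (B ν : ℝ) (hB : 0 < B) (hν : 0 ≤ ν)
    (L : (H → ℝ) → (K → ℝ) → ℝ)
    (hL : ∀ Q lam, L Q lam = errhat Q + ∑ k, lam k * (gamhat Q k - chat k))
    (Δ : Set (H → ℝ)) (hΔ : Δ = stdSimplex ℝ H)
    (Λ : Set (K → ℝ)) (hΛ : Λ = {lam | (∀ k, 0 ≤ lam k) ∧ ∑ k, |lam k| ≤ B})
    (herrdev : ∀ Q ∈ Δ, |errhat Q - err Q| ≤ ε0)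
    (hgamdev : ∀ Q ∈ Δ, ∀ k, |gamhat Q k - gam Q k| ≤ ε k)
    (herr01 : ∀ Q ∈ Δ, errhat Q ∈ Set.Icc (0 : ℝ) 1)
    (Qstar : H → ℝ) (hQstar : Qstar ∈ Δ) (hfeas : ∀ k, gam Qstar k ≤ c k)
    (Qh : H → ℝ) (lamh : K → ℝ) (hQh : Qh ∈ Δ) (hlamh : lamh ∈ Λ)
    (hsaddle1 : ∀ Q ∈ Δ, L Qh lamh ≤ L Q lamh + ν)
    (hsaddle2 : ∀ lam ∈ Λ, L Qh lam - ν ≤ L Qh lamh) :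
    err Qh ≤ err Qstar + 2 * ν + 2 * ε0 ∧
      ∀ k, gam Qh k ≤ c k + (1 + 2 * ν) / B + 2 * ε k :=
  generalization_of_saddle_point_general H K errhat err gamhat gam c ε0 ε chat hchat B ν hB L hL Δ Λ
    hΛ herrdev hgamdev herr01 Qstar hQstar hfeas Qh lamh hQh hlamh hsaddle1 hsaddle2
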